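/- Let (O, I, R) be a formal context and let maxsupp ∈ ℕ. If X ⊆ I is a rare itemset (Supp(X) ≤ maxsupp), then the set {G ⊆ X : G is a minimal generator and Supp(G) ≤ maxsupp} is nonempty and Supp(X) = min{Supp(G) : G ⊆ X, G a minimal generator with Supp(G) ≤ maxsupp}. Thus the rare minimal generators together with their supports form an exact concise representation of the rare itemsets. -/
import Mathlib


open Finset

variable {O ι : Type*}

/-- The extent of an itemset `X`: objects possessing every item of `X`. -/
def extent [Fintype O] (R : O → ι → Prop) [∀ o i, Decidable (R o i)]
    (X : Finset ι) : Finset O :=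
  univ.filter fun o => ∀ i ∈ X, R o i

/-- The (conjunctive) support of an itemset `X`. -/
def supp [Fintype O] (R : O → ι → Prop) [∀ o i, Decidable (R o i)]
    (X : Finset ι) : ℕ :=
  (extent R X).card

/-- An itemset `G` is a minimal generator if no proper subset has the same support. -/
def IsMinGen [Fintype O] (R : O → ι → Prop) [∀ o i, Decidable (R o i)]
    (G : Finset ι) : Prop :=
  ∀ G' ⊂ G, supp R G' ≠ supp R G

lemma supp_anti [Fintype O] (R : O → ι → Prop) [∀ o i, Decidable (R o i)]
    {A B : Finset ι} (h : A ⊆ B) : supp R B ≤ supp R A := by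
  apply Finset.card_le_card
  intro o ho
  simp only [extent, Finset.mem_filter, Finset.mem_univ, true_and] at *
  exact fun i hi => ho i (h hi)

/-- Exact concise representation by rare minimal generators: every rare itemset
contains a rare minimal generator, and its support is the minimum of the supports
of the rare minimal generators it contains. -/
theorem rare_minGen_exact_representation
    [Fintype O] (R : O → ι → Prop) [∀ o i, Decidable (R o i)]
    (maxsupp : ℕ) (X : Finset ι) (hX : supp R X ≤ maxsupp) :
    (∃ G ⊆ X, IsMinGen R G ∧ supp R G ≤ maxsupp) ∧
    IsLeast {n : ℕ | ∃ G, G ⊆ X ∧ IsMinGen R G ∧ supp R G ≤ maxsupp ∧ n = supp R G}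
      (supp R X) := by
  -- the set of generators of X inside X
  set S : Finset (Finset ι) := X.powerset.filter (fun G => supp R G = supp R X) with hS
  have hXS : X ∈ S := by simp [hS]
  obtain ⟨G, hGS, hGmin⟩ := S.exists_min_image (fun G => G.card) ⟨X, hXS⟩
  simp only [hS, Finset.mem_filter, Finset.mem_powerset] at hGS
  have hGen : IsMinGen R G := by
    intro G' hG' hsupp
    have hG'S : G' ∈ S := by
      simp only [hS, Finset.mem_filter, Finset.mem_powerset]
      exact ⟨hG'.1.trans hGS.1, hsupp.trans hGS.2⟩
    have := hGmin G' hG'S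
    exact absurd this (by simpa using Finset.card_lt_card hG')
  have hGsupp : supp R G = supp R X := hGS.2
  refine ⟨⟨G, hGS.1, hGen, hGsupp ▸ hX⟩, ?_, ?_⟩
  · exact ⟨G, hGS.1, hGen, hGsupp ▸ hX, hGsupp.symm⟩
  · rintro n ⟨G', hG'X, _, _, rfl⟩
    exact supp_anti R hG'X
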